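/- arXiv:cs/0508077 — 4 statements merged into one kernel-verified Lean document; each statement's English description precedes it below -/
import Mathlib

section
/- Let L/K be a cyclic extension of degree n with Galois group ⟨σ⟩ and γ ∈ K*. If none of γ, γ², …, γ^{n-1} is a norm from L to K, then the cyclic algebra (L/K, σ, γ) is a division algebra. -/
/-!
Through `ι`, the algebra `A` is a left `L`-vector space with basis `1, e, …, e^{n-1}`.
A nonzero proper left ideal `I` would be an `L`-subspace of dimension `m` with `0 < m < n`,
on which left multiplication by `e` is `σ⁻¹`-semilinear with `n`-th power `γ`. If `M` is its
matrix, then `M · σ⁻¹(M) ⋯ σ^{-(n-1)}(M) = γ · 1`, and taking determinants gives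
`N_{L/K}(det M) = γ^m`. Hence `A` is a simple left module over itself, i.e. a division ring.
-/

open Module Finset Matrix

section SemilinearDet

variable {L V ι : Type*} [CommRing L] [AddCommGroup V] [Module L V] [Fintype ι]
  {τ : L →+* L}

theorem Module.Basis.equivFun_semilinear_apply (b : Basis ι L V) (f : V →ₛₗ[τ] V) (v : V) :
    b.equivFun (f v) = b.toMatrix (f ∘ b) *ᵥ (τ ∘ b.equivFun v) := by
  ext i
  conv_lhs => rw [← b.sum_repr v]
  simp only [map_sum, map_smulₛₗ, Basis.equivFun_apply, Finset.sum_apply,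
    RingHom.id_apply, Pi.smul_apply, smul_eq_mul, mulVec, dotProduct,
    Basis.toMatrix_apply, Function.comp_apply, mul_comm]

theorem Module.Basis.exists_equivFun_iterate_semilinear [DecidableEq ι] (b : Basis ι L V)
    (f : V →ₛₗ[τ] V) (k : ℕ) :
    ∃ P : Matrix ι ι L, P.det = ∏ j ∈ range k, τ^[j] (b.toMatrix (f ∘ b)).det ∧
      ∀ v, b.equivFun (f^[k] v) = P *ᵥ (τ^[k] ∘ b.equivFun v) := by
  induction k with
  | zero => exact ⟨1, by simp, fun v => by simp⟩
  | succ k ih =>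
    obtain ⟨P, hdet, hP⟩ := ih
    refine ⟨b.toMatrix (f ∘ b) * P.map τ, ?_, fun v => ?_⟩
    · have hdet_map : (P.map τ).det = τ P.det := (τ.map_det P).symm
      rw [det_mul, hdet_map, hdet, map_prod, prod_range_succ', Function.iterate_zero_apply,
        mul_comm]
      simp only [← Function.iterate_succ_apply' τ]
    · rw [Function.iterate_succ_apply', b.equivFun_semilinear_apply, hP, ← mulVec_mulVec]
      congr 1
      ext i
      rw [Function.comp_apply, RingHom.map_mulVec, Function.iterate_succ']
      rfl

theorem Module.Basis.prod_iterate_det_toMatrix_eq_pow [DecidableEq ι] (b : Basis ι L V)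
    (f : V →ₛₗ[τ] V) {n : ℕ} (hτ : τ^[n] = id) (c : L) (hf : ∀ v, f^[n] v = c • v) :
    ∏ j ∈ range n, τ^[j] (b.toMatrix (f ∘ b)).det = c ^ Fintype.card ι := by
  obtain ⟨P, hdet, hP⟩ := b.exists_equivFun_iterate_semilinear f n
  have hPc : P = c • 1 := mulVec_injective <| funext fun x => by
    have h := hP (b.equivFun.symm x)
    rw [hf, map_smul, LinearEquiv.apply_symm_apply, hτ, Function.id_comp] at h
    rw [← h, smul_mulVec, one_mulVec]
  rw [← hdet, hPc, det_smul, det_one, mul_one]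

end SemilinearDet

theorem algebraMap_norm_eq_prod_range_orderOf {K L : Type*} [Field K] [Field L] [Algebra K L]
    [IsGalois K L] [FiniteDimensional K L] {σ : L ≃ₐ[K] L} (hσ : orderOf σ = finrank K L)
    (z : L) : algebraMap K L (Algebra.norm K z) = ∏ i ∈ range (orderOf σ), (σ ^ i) z := by
  classical
  have hinj : Set.InjOn (σ ^ ·) (range (orderOf σ)) := by
    simpa [Set.InjOn] using pow_injOn_Iio_orderOf (x := σ)
  have himage : (range (orderOf σ)).image (σ ^ ·) = univ := by
    refine eq_univ_of_card _ ?_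
    rw [card_image_of_injOn hinj, card_range, hσ, ← IsGalois.card_aut_eq_finrank,
      Nat.card_eq_fintype_card]
  rw [Algebra.norm_eq_prod_automorphisms, ← himage, prod_image hinj]

theorem exists_norm_eq_pow_finrank_of_semilinear {K L V : Type*} [Field K] [Field L]
    [Algebra K L] [IsGalois K L] [FiniteDimensional K L] [AddCommGroup V] [Module L V]
    [FiniteDimensional L V] {σ : L ≃ₐ[K] L} (hσ : orderOf σ = finrank K L)
    (f : V →ₛₗ[(σ : L →+* L)] V) (γ : K)
    (hf : ∀ v, f^[orderOf σ] v = algebraMap K L γ • v) :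
    ∃ l : L, Algebra.norm K l = γ ^ finrank L V := by
  classical
  let b := finBasis L V
  refine ⟨(b.toMatrix (f ∘ b)).det, (algebraMap K L).injective ?_⟩
  have hσn : (σ : L →+* L)^[orderOf σ] = id := by
    rw [RingHom.coe_coe, ← AlgEquiv.coe_pow, pow_orderOf_eq_one]
    rfl
  have h := b.prod_iterate_det_toMatrix_eq_pow f hσn _ hf
  rw [Fintype.card_fin] at h
  rw [algebraMap_norm_eq_prod_range_orderOf hσ, map_pow, ← h]
  simp only [AlgEquiv.coe_pow, RingHom.coe_coe]

section CyclicAlgebra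

variable {K L A : Type*} [CommSemiring K] [Semiring L] [Algebra K L] [Semiring A] [Algebra K A]
  {σ : L ≃ₐ[K] L} {ι : L →ₐ[K] A} {e : A}

theorem map_mul_pow_eq_pow_mul_map (htwist : ∀ l, ι l * e = e * ι (σ l)) (k : ℕ) (l : L) :
    ι l * e ^ k = e ^ k * ι ((σ ^ k) l) := by
  induction k generalizing l with
  | zero => simp
  | succ k ih =>
    rw [pow_succ', ← mul_assoc, htwist, mul_assoc, ih, ← mul_assoc, pow_succ,
      AlgEquiv.mul_apply]

theorem existsUnique_eq_sum_map_mul_pow_of_twist {n : ℕ}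
    (htwist : ∀ l, ι l * e = e * ι (σ l))
    (hbasis : ∀ x : A, ∃! c : Fin n → L, x = ∑ i : Fin n, e ^ (i : ℕ) * ι (c i))
    (x : A) : ∃! d : Fin n → L, x = ∑ i : Fin n, ι (d i) * e ^ (i : ℕ) :=
  (Equiv.piCongrRight fun i : Fin n => (σ ^ (i : ℕ)).toEquiv).existsUnique_congr
    (fun d => by simp only [map_mul_pow_eq_pow_mul_map htwist]; rfl) |>.mpr (hbasis x)

noncomputable def basisPowOfTwist {n : ℕ} [Module L A]
    (hsmul : ∀ (l : L) (a : A), l • a = ι l * a) (htwist : ∀ l, ι l * e = e * ι (σ l))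
    (hbasis : ∀ x : A, ∃! c : Fin n → L, x = ∑ i : Fin n, e ^ (i : ℕ) * ι (c i)) :
    Basis (Fin n) L A :=
  .ofEquivFun <| LinearEquiv.symm <|
    .ofBijective (Fintype.linearCombination L fun i : Fin n => e ^ (i : ℕ)) <|
      (Function.bijective_iff_existsUnique _).mpr fun x => by
        simpa only [Fintype.linearCombination_apply, hsmul, eq_comm] using
          existsUnique_eq_sum_map_mul_pow_of_twist htwist hbasis x

end CyclicAlgebra

theorem exists_norm_eq_pow_finrank_of_leftIdeal {K L A : Type*} [Field K] [Field L]
    [Algebra K L] [IsGalois K L] [FiniteDimensional K L] [Ring A] [Module L A] [IsScalarTower L A A]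
    [FiniteDimensional L A] {σ : L ≃ₐ[K] L} (hσ : orderOf σ = finrank K L) (e : A) (γ : K)
    (he : ∀ a : A, e ^ orderOf σ * a = algebraMap K L γ • a)
    (htwist : ∀ (l : L) (a : A), e * (l • a) = σ l • (e * a)) (I : Submodule A A) :
    ∃ l : L, Algebra.norm K l = γ ^ finrank L (I.restrictScalars L) := by
  let f : I.restrictScalars L →ₛₗ[(σ : L →+* L)] I.restrictScalars L :=
    { toFun := fun v => ⟨e * v, I.smul_mem e v.2⟩
      map_add' := fun v w => Subtype.ext (mul_add e v w)
      map_smul' := fun l v => Subtype.ext (htwist l v) }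
  have hf_iterate : ∀ k v, (f^[k] v : A) = e ^ k * v := by
    intro k v
    induction k with
    | zero => simp
    | succ k ih => rw [Function.iterate_succ_apply', pow_succ', mul_assoc, ← ih]; rfl
  exact exists_norm_eq_pow_finrank_of_semilinear hσ f γ fun v => Subtype.ext <| by
    rw [hf_iterate, he]; rfl

theorem cyclic_algebra_is_division_of_non_norm_general
    {K L A : Type*} [Field K] [Field L] [Algebra K L] [IsGalois K L]
    [Ring A] [Algebra K A]
    (n : ℕ)
    (σ : L ≃ₐ[K] L) (hσ : orderOf σ = n) (hrank : Module.finrank K L = n)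
    (γ : K)
    (ι : L →ₐ[K] A) (e : A)
    (he : e ^ n = algebraMap K A γ)
    (htwist : ∀ l : L, ι l * e = e * ι (σ l))
    (hbasis : ∀ x : A, ∃! c : Fin n → L, x = ∑ i : Fin n, e ^ (i : ℕ) * ι (c i))
    (hnorm : ∀ i : ℕ, 1 ≤ i → i < n → ∀ l : L, Algebra.norm K l ≠ γ ^ i) :
    ∀ x : A, x ≠ 0 → ∃ y : A, x * y = 1 ∧ y * x = 1 := by
  let _ : Module L A := Module.compHom A ι.toRingHom
  have hsmul : ∀ (l : L) (a : A), l • a = ι l * a := fun _ _ => rfl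
  have : IsScalarTower L A A := ⟨fun l a b => mul_assoc (ι l) a b⟩
  let b := basisPowOfTwist hsmul htwist hbasis
  have := Module.Finite.of_basis b
  rcases subsingleton_or_nontrivial A with _ | _
  · exact fun x hx => absurd (Subsingleton.elim x 0) hx
  have hsimple : IsSimpleModule A A := by
    refine { eq_bot_or_eq_top := fun I => or_iff_not_imp_left.mpr fun hbot =>
      by_contra fun htop => ?_ }
    set m := finrank L (I.restrictScalars L)
    have hm : 1 ≤ m := Submodule.one_le_finrank_iff.mpr (by simpa using hbot)
    have hmn : m < n := by
      simpa [finrank_eq_card_basis b] using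
        Submodule.finrank_lt (s := I.restrictScalars L) (by simpa using htop)
    have : FiniteDimensional K L := Module.finite_of_finrank_pos (by omega)
    obtain ⟨l, hl⟩ := exists_norm_eq_pow_finrank_of_leftIdeal (σ := σ⁻¹)
      (by rw [orderOf_inv, hσ, hrank]) e γ
      (fun a => by rw [orderOf_inv, hσ, he, hsmul, ι.commutes])
      (fun l a => by rw [hsmul, hsmul, ← mul_assoc, ← mul_assoc, htwist, ← AlgEquiv.mul_apply,
        mul_inv_cancel, AlgEquiv.one_apply]) I
    exact hnorm m hm hmn l hl
  intro x hx
  obtain ⟨u, rfl⟩ := (isSimpleModule_self_iff_isUnit.mp hsimple).2 x hx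
  exact ⟨↑u⁻¹, u.mul_inv, u.inv_mul⟩

/-- norm criterion for a cyclic algebra (L/K, σ, γ) of degree n to be a
division algebra: if none of γ, γ², …, γ^{n-1} is a norm from L to K, then every
nonzero element of the algebra is invertible. -/
theorem cyclic_algebra_is_division_of_non_norm
    {K L A : Type*} [Field K] [Field L] [Algebra K L] [IsGalois K L]
    [Ring A] [Algebra K A]
    (n : ℕ)
    (σ : L ≃ₐ[K] L) (hσ : orderOf σ = n) (hrank : Module.finrank K L = n)
    (γ : K) (hγ : γ ≠ 0)
    (ι : L →ₐ[K] A) (hinj : Function.Injective ι) (e : A)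
    (he : e ^ n = algebraMap K A γ)
    (htwist : ∀ l : L, ι l * e = e * ι (σ l))
    (hbasis : ∀ x : A, ∃! c : Fin n → L, x = ∑ i : Fin n, e ^ (i : ℕ) * ι (c i))
    (hnorm : ∀ i : ℕ, 1 ≤ i → i < n → ∀ l : L, Algebra.norm K l ≠ γ ^ i) :
    ∀ x : A, x ≠ 0 → ∃ y : A, x * y = 1 ∧ y * x = 1 :=
  cyclic_algebra_is_division_of_non_norm_general n σ hσ hrank γ ι e he htwist hbasis hnorm
end

section
/- Let A = (L/K, σ, γ) be a cyclic division algebra with involution α as constructed (with z = γα_L(γ) = 1), and let x ∈ A with x ≠ ±1. Then x·α(x) = 1 if and only if there exists u ∈ A* with u·α(u) = α(u)·u and x = u·α(u)^{-1} = α(u)^{-1}·u. -/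
open Matrix

noncomputable section

variable {K L A : Type*} [Field K] [Field L] [Algebra K L] [Ring A] [Algebra K A]

/-- Coordinates of x ∈ A in the right L-basis {1, e, e²}. -/
def coeff (ι : L →ₐ[K] A) (e : A)
    (hbasis : ∀ x : A, ∃! c : Fin 3 → L, x = ι (c 0) + e * ι (c 1) + e ^ 2 * ι (c 2))
    (x : A) : Fin 3 → L :=
  (hbasis x).choose

/-- The map α : A → A, α(x₀ + e x₁ + e² x₂)
      = α_L(x₀) + e⁻¹ z σ⁻¹(α_L(x₁)) + e⁻² z² σ⁻²(α_L(x₂)),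
where z = γ·α_L(γ) and e⁻¹ = γ⁻¹e². -/
def cyclicInvolution (ι : L →ₐ[K] A) (e : A)
    (hbasis : ∀ x : A, ∃! c : Fin 3 → L, x = ι (c 0) + e * ι (c 1) + e ^ 2 * ι (c 2))
    (σ : L ≃ₐ[K] L) (αL : L →+* L) (γ : K) (x : A) : A :=
  let c := coeff ι e hbasis x
  let z : L := algebraMap K L γ * αL (algebraMap K L γ)
  let einv : A := algebraMap K A γ⁻¹ * e ^ 2
  ι (αL (c 0)) + einv * ι (z * σ.symm (αL (c 1)))
    + einv ^ 2 * ι (z ^ 2 * σ.symm (σ.symm (αL (c 2))))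

def mk3 (ι : L →ₐ[K] A) (e : A) (x0 x1 x2 : L) : A :=
  ι x0 + e * ι x1 + e ^ 2 * ι x2

section Aux
variable (σ : L ≃ₐ[K] L) (γ : K) (ι : L →ₐ[K] A) (e : A)
    (hbasis : ∀ x : A, ∃! c : Fin 3 → L, x = ι (c 0) + e * ι (c 1) + e ^ 2 * ι (c 2))
    (αL : L →+* L)

theorem coeff_eq_of {x : A} {c : Fin 3 → L}
    (h : x = ι (c 0) + e * ι (c 1) + e ^ 2 * ι (c 2)) :
    coeff ι e hbasis x = c :=
  ((hbasis x).choose_spec.2 c h).symm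

theorem mk3_coeff (x : A) :
    mk3 ι e (coeff ι e hbasis x 0) (coeff ι e hbasis x 1) (coeff ι e hbasis x 2) = x :=
  ((hbasis x).choose_spec.1).symm

theorem coeff_mk3 (x0 x1 x2 : L) :
    coeff ι e hbasis (mk3 ι e x0 x1 x2) = ![x0, x1, x2] := by
  apply coeff_eq_of
  simp [mk3]

theorem alpha_mk3_raw (x0 x1 x2 : L) :
    cyclicInvolution ι e hbasis σ αL γ (mk3 ι e x0 x1 x2) =
      ι (αL x0)
        + (algebraMap K A γ⁻¹ * e ^ 2) *
            ι (algebraMap K L γ * αL (algebraMap K L γ) * σ.symm (αL x1))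
        + (algebraMap K A γ⁻¹ * e ^ 2) ^ 2 *
            ι ((algebraMap K L γ * αL (algebraMap K L γ)) ^ 2
                * σ.symm (σ.symm (αL x2))) := by
  unfold cyclicInvolution
  rw [coeff_mk3]
  simp

theorem sigma_cubed (hσ : orderOf σ = 3) : ∀ l, σ (σ (σ l)) = l := by
  intro l
  have h := pow_orderOf_eq_one σ
  rw [hσ] at h
  have : (σ ^ 3) l = l := by rw [h]; rfl
  rw [show (σ:L ≃ₐ[K] L) ^ 3 = σ * σ * σ by rw [pow_succ, pow_succ, pow_one]] at this
  simpa using this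

theorem alpha_mk3 (hσ : orderOf σ = 3) (hγ : γ ≠ 0)
    (he : e ^ 3 = algebraMap K A γ)
    (htwist : ∀ l : L, ι l * e = e * ι (σ l))
    (hz : algebraMap K L γ * αL (algebraMap K L γ) = 1)
    (x0 x1 x2 : L) :
    cyclicInvolution ι e hbasis σ αL γ (mk3 ι e x0 x1 x2) =
      mk3 ι e (αL x0) ((algebraMap K L γ)⁻¹ * σ (αL x2))
        ((algebraMap K L γ)⁻¹ * σ (σ (αL x1))) := by
  have hS3 := sigma_cubed σ hσ
  have hsymm : ∀ l, σ.symm l = σ (σ l) := by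
    intro l; apply σ.injective; rw [σ.apply_symm_apply, hS3]
  have hg0 : (algebraMap K L γ) ≠ 0 := by simpa using hγ
  have hginv : ι ((algebraMap K L γ)⁻¹) = algebraMap K A γ⁻¹ := by
    rw [← map_inv₀ (algebraMap K L), ι.commutes]
  have hσginv : σ ((algebraMap K L γ)⁻¹) = ((algebraMap K L γ)⁻¹) := by
    rw [map_inv₀, AlgEquiv.commutes]
  have move : ∀ l : L, ι l * e ^ 2 = e ^ 2 * ι (σ (σ l)) := by
    intro l
    rw [sq, ← mul_assoc, htwist, mul_assoc, htwist, ← mul_assoc]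
  have h2 : algebraMap K A γ⁻¹ * e ^ 2 = e ^ 2 * ι ((algebraMap K L γ)⁻¹) := by
    rw [← hginv, move, hσginv, hσginv]
  have h4 : e ^ 2 * e ^ 2 = e * ι (algebraMap K L γ) := by
    have h44 : e ^ 2 * e ^ 2 = e * e ^ 3 := by
      rw [← pow_add]
      show e ^ 4 = e * e ^ 3
      rw [pow_succ']
    rw [h44, he, ← ι.commutes γ]
  have h3 : (algebraMap K A γ⁻¹ * e ^ 2) ^ 2 = e * ι ((algebraMap K L γ)⁻¹) := by
    rw [h2, sq, mul_assoc, ← mul_assoc (ι ((algebraMap K L γ)⁻¹)), move, hσginv, hσginv,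
      ← mul_assoc, ← mul_assoc, h4, mul_assoc, mul_assoc]
    congr 1
    rw [← _root_.map_mul, ← _root_.map_mul]
    congr 1
    field_simp
  rw [alpha_mk3_raw, hz]
  simp only [one_mul, one_pow]
  rw [h3, h2]
  simp only [hsymm, hS3]
  rw [mul_assoc (e ^ 2), ← _root_.map_mul, mul_assoc e, ← _root_.map_mul]
  unfold mk3
  abel

theorem mk3_mul (he : e ^ 3 = algebraMap K A γ)
    (htwist : ∀ l : L, ι l * e = e * ι (σ l))
    (a0 a1 a2 b0 b1 b2 : L) :
    mk3 ι e a0 a1 a2 * mk3 ι e b0 b1 b2 =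
      mk3 ι e
        (a0 * b0 + algebraMap K L γ * (σ (σ a1) * b2)
          + algebraMap K L γ * (σ a2 * b1))
        (a1 * b0 + σ a0 * b1 + algebraMap K L γ * (σ (σ a2) * b2))
        (a2 * b0 + σ a1 * b1 + σ (σ a0) * b2) := by
  have hg : ι (algebraMap K L γ) = algebraMap K A γ := ι.commutes γ
  have h4 : e ^ 2 * e ^ 2 = e * ι (algebraMap K L γ) := by
    have h44 : e ^ 2 * e ^ 2 = e * e ^ 3 := by
      rw [← pow_add]
      show e ^ 4 = e * e ^ 3
      rw [pow_succ']
    rw [h44, he, ← ι.commutes γ]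
  have p01 : ∀ l m : L, ι l * (e * ι m) = e * ι (σ l * m) := by
    intro l m
    rw [← mul_assoc, htwist, mul_assoc, ← _root_.map_mul]
  have p02 : ∀ l m : L, ι l * (e ^ 2 * ι m) = e ^ 2 * ι (σ (σ l) * m) := by
    intro l m
    rw [sq, ← mul_assoc, ← mul_assoc, htwist, mul_assoc e (ι (σ l)), htwist,
      ← mul_assoc, ← sq, mul_assoc, ← _root_.map_mul]
  have p10 : ∀ l m : L, (e * ι l) * ι m = e * ι (l * m) := by
    intro l m
    rw [mul_assoc, ← _root_.map_mul]
  have p11 : ∀ l m : L, (e * ι l) * (e * ι m) = e ^ 2 * ι (σ l * m) := by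
    intro l m
    rw [mul_assoc, p01, ← mul_assoc, ← sq]
  have p12 : ∀ l m : L, (e * ι l) * (e ^ 2 * ι m) = ι (algebraMap K L γ * (σ (σ l) * m)) := by
    intro l m
    rw [mul_assoc, p02, ← mul_assoc, ← pow_succ', he, ← hg, ← _root_.map_mul]
  have p20 : ∀ l m : L, (e ^ 2 * ι l) * ι m = e ^ 2 * ι (l * m) := by
    intro l m
    rw [mul_assoc, ← _root_.map_mul]
  have p21 : ∀ l m : L, (e ^ 2 * ι l) * (e * ι m) = ι (algebraMap K L γ * (σ l * m)) := by
    intro l m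
    rw [mul_assoc, p01, ← mul_assoc, ← pow_succ, he, ← hg, ← _root_.map_mul]
  have p22 : ∀ l m : L, (e ^ 2 * ι l) * (e ^ 2 * ι m) = e * ι (algebraMap K L γ * (σ (σ l) * m)) := by
    intro l m
    rw [mul_assoc, p02, ← mul_assoc, h4, mul_assoc, ← _root_.map_mul]
  unfold mk3
  simp only [add_mul, mul_add]
  simp only [p01, p02, p10, p11, p12, p20, p21, p22, ← _root_.map_mul]
  simp only [map_add, mul_add]
  abel

theorem mk3_add (a0 a1 a2 b0 b1 b2 : L) :
    mk3 ι e a0 a1 a2 + mk3 ι e b0 b1 b2 = mk3 ι e (a0 + b0) (a1 + b1) (a2 + b2) := by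
  unfold mk3
  simp only [map_add, mul_add]
  abel

theorem mk3_one : mk3 ι e 1 0 0 = 1 := by
  simp [mk3]

section props
variable (hσ : orderOf σ = 3) (hγ : γ ≠ 0)
    (he : e ^ 3 = algebraMap K A γ)
    (htwist : ∀ l : L, ι l * e = e * ι (σ l))
    (hαL : ∀ l : L, αL (αL l) = l)
    (hcomm : ∀ (τ : L ≃ₐ[K] L) (l : L), αL (τ l) = τ (αL l))
    (hz : algebraMap K L γ * αL (algebraMap K L γ) = 1)

include hσ hγ he htwist hz in
theorem alpha_add (x y : A) :
    cyclicInvolution ι e hbasis σ αL γ (x + y) =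
      cyclicInvolution ι e hbasis σ αL γ x + cyclicInvolution ι e hbasis σ αL γ y := by
  have hx := mk3_coeff ι e hbasis x
  have hy := mk3_coeff ι e hbasis y
  rw [← hx, ← hy, mk3_add,
    alpha_mk3 σ γ ι e hbasis αL hσ hγ he htwist hz,
    alpha_mk3 σ γ ι e hbasis αL hσ hγ he htwist hz,
    alpha_mk3 σ γ ι e hbasis αL hσ hγ he htwist hz,
    mk3_add]
  simp only [map_add, mul_add]

include hσ hγ he htwist hz in
theorem alpha_one :
    cyclicInvolution ι e hbasis σ αL γ 1 = 1 := by
  rw [← mk3_one ι e, alpha_mk3 σ γ ι e hbasis αL hσ hγ he htwist hz]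
  simp

include hσ hγ he htwist hαL hcomm hz in
theorem alpha_alpha (x : A) :
    cyclicInvolution ι e hbasis σ αL γ (cyclicInvolution ι e hbasis σ αL γ x) = x := by
  have hx := mk3_coeff ι e hbasis x
  rw [← hx, alpha_mk3 σ γ ι e hbasis αL hσ hγ he htwist hz,
    alpha_mk3 σ γ ι e hbasis αL hσ hγ he htwist hz]
  have hS3 := sigma_cubed σ hσ
  have hg0 : (algebraMap K L γ) ≠ 0 := by simpa using hγ
  have hβg : αL (algebraMap K L γ) = (algebraMap K L γ)⁻¹ :=
    eq_inv_of_mul_eq_one_right hz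
  have hc : ∀ l, αL (σ l) = σ (αL l) := hcomm σ
  congr 1
  · exact hαL _
  · simp only [_root_.map_mul, map_inv₀, hc, hβg, hS3, AlgEquiv.commutes, hαL, inv_inv]
    field_simp
  · simp only [_root_.map_mul, map_inv₀, hc, hβg, hS3, AlgEquiv.commutes, hαL, inv_inv]
    field_simp

include hσ hγ he htwist hαL hcomm hz in
theorem alpha_antimul (x y : A) :
    cyclicInvolution ι e hbasis σ αL γ (x * y) =
      cyclicInvolution ι e hbasis σ αL γ y * cyclicInvolution ι e hbasis σ αL γ x := by
  have hx := mk3_coeff ι e hbasis x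
  have hy := mk3_coeff ι e hbasis y
  rw [← hx, ← hy, mk3_mul σ γ ι e he htwist,
    alpha_mk3 σ γ ι e hbasis αL hσ hγ he htwist hz,
    alpha_mk3 σ γ ι e hbasis αL hσ hγ he htwist hz,
    alpha_mk3 σ γ ι e hbasis αL hσ hγ he htwist hz,
    mk3_mul σ γ ι e he htwist]
  have hS3 := sigma_cubed σ hσ
  have hg0 : (algebraMap K L γ) ≠ 0 := by simpa using hγ
  have hβg : αL (algebraMap K L γ) = (algebraMap K L γ)⁻¹ :=
    eq_inv_of_mul_eq_one_right hz
  have hc : ∀ l, αL (σ l) = σ (αL l) := hcomm σ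
  congr 1
  · simp only [map_add, _root_.map_mul, map_inv₀, hc, hβg, hS3, AlgEquiv.commutes, hαL, inv_inv]
    field_simp
  · simp only [map_add, _root_.map_mul, map_inv₀, hc, hβg, hS3, AlgEquiv.commutes, hαL, inv_inv]
    field_simp
    ring
  · simp only [map_add, _root_.map_mul, map_inv₀, hc, hβg, hS3, AlgEquiv.commutes, hαL, inv_inv]
    field_simp
    ring

end props

end Aux

/-- in a cubic cyclic division algebra with involution α (z = γα_L(γ) = 1),
for x ≠ ±1 one has x·α(x) = 1 iff x = u·α(u)⁻¹ = α(u)⁻¹·u for some invertible u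
commuting with α(u). -/
theorem x_alpha_x_eq_one_iff_exists_u
    (σ : L ≃ₐ[K] L) (hσ : orderOf σ = 3) (hrank : Module.finrank K L = 3)
    (γ : K) (hγ : γ ≠ 0)
    (ι : L →ₐ[K] A) (hinj : Function.Injective ι) (e : A)
    (he : e ^ 3 = algebraMap K A γ)
    (htwist : ∀ l : L, ι l * e = e * ι (σ l))
    (hbasis : ∀ x : A, ∃! c : Fin 3 → L, x = ι (c 0) + e * ι (c 1) + e ^ 2 * ι (c 2))
    (hdiv : ∀ a : A, a ≠ 0 → ∃ b : A, a * b = 1 ∧ b * a = 1)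
    (αL : L →+* L) (hαL : ∀ l : L, αL (αL l) = l)
    (hcomm : ∀ (τ : L ≃ₐ[K] L) (l : L), αL (τ l) = τ (αL l))
    (hz : algebraMap K L γ * αL (algebraMap K L γ) = 1)
    (x : A) (hx1 : x ≠ 1) (hx2 : x ≠ -1) :
    x * cyclicInvolution ι e hbasis σ αL γ x = 1 ↔
      ∃ u w : A,
        cyclicInvolution ι e hbasis σ αL γ u * w = 1 ∧
        w * cyclicInvolution ι e hbasis σ αL γ u = 1 ∧
        u * cyclicInvolution ι e hbasis σ αL γ u
          = cyclicInvolution ι e hbasis σ αL γ u * u ∧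
        x = u * w ∧ x = w * u := by
  set α : A → A := cyclicInvolution ι e hbasis σ αL γ with hαdef
  have hadd : ∀ a b : A, α (a + b) = α a + α b :=
    fun a b => alpha_add σ γ ι e hbasis αL hσ hγ he htwist hz a b
  have hone : α 1 = 1 := alpha_one σ γ ι e hbasis αL hσ hγ he htwist hz
  have hinvo : ∀ a : A, α (α a) = a :=
    fun a => alpha_alpha σ γ ι e hbasis αL hσ hγ he htwist hαL hcomm hz a
  have hanti : ∀ a b : A, α (a * b) = α b * α a :=
    fun a b => alpha_antimul σ γ ι e hbasis αL hσ hγ he htwist hαL hcomm hz a b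
  constructor
  · intro hx
    have hnz : x ≠ 0 := by
      intro h0
      rw [h0, zero_mul] at hx
      exact hx1 (h0 ▸ hx)
    obtain ⟨b, hb1, hb2⟩ := hdiv x hnz
    have hax : α x = b := by
      have h := congrArg (fun t => b * t) hx
      simp only [mul_one] at h
      rw [← mul_assoc, hb2, one_mul] at h
      exact h
    have haxx : α x * x = 1 := by rw [hax]; exact hb2
    have hu0 : (1 : A) + x ≠ 0 := fun h => hx2 (eq_neg_of_add_eq_zero_right h)
    have hαu : α (1 + x) = 1 + α x := by rw [hadd, hone]
    have hxαu : x * α (1 + x) = 1 + x := by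
      rw [hαu, mul_add, mul_one, hx, add_comm]
    have hαux : α (1 + x) * x = 1 + x := by
      rw [hαu, add_mul, one_mul, haxx, add_comm]
    have hαu0 : α (1 + x) ≠ 0 := fun h => hu0 (by rw [← hαux, h, zero_mul])
    obtain ⟨w, hw1, hw2⟩ := hdiv (α (1 + x)) hαu0
    refine ⟨1 + x, w, hw1, hw2, ?_, ?_, ?_⟩
    · rw [hαu]
      have e1 : (1 + x) * (1 + α x) = 1 + α x + x + x * α x := by noncomm_ring
      have e2 : (1 + α x) * (1 + x) = 1 + α x + x + α x * x := by noncomm_ring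
      rw [e1, e2, hx, haxx]
    · rw [← hxαu, mul_assoc, hw1, mul_one]
    · rw [← hαux, ← mul_assoc, hw2, one_mul]
  · rintro ⟨u, w, h1, h2, _h3, h4, h5⟩
    have hax : α x = α u * α w := by rw [h5, hanti]
    have huaw : u * α w = 1 := by
      have h := congrArg α h2
      rw [hanti, hinvo, hone] at h
      exact h
    rw [hax, h4]
    calc u * w * (α u * α w) = u * (w * α u * α w) := by noncomm_ring
    _ = 1 := by rw [h2, one_mul, huaw]
end
end

section
/- The cyclic algebra A = (ℚ(ζ₇ + ζ₇^{-1}, ζ₃)/ℚ(ζ₃), σ, ζ₃), where σ: ζ₇ + ζ₇^{-1} ↦ ζ₇² + ζ₇^{-2} generates Gal(L/ℚ(ζ₃)), is a division algebra; equivalently, neither ζ₃ nor ζ₃² is a norm from L = ℚ(ζ₇ + ζ₇^{-1}, ζ₃) to ℚ(ζ₃). -/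
/-!
Write `y = a + bθ + cθ²`; then `N_{L/K}(y)` is the norm form `N(a, b, c)` of `ℚ(θ)/ℚ`, a ternary
cubic with integer coefficients. Since `7 ≡ 1 mod 3`, `ℚ(ζ₃)` embeds into `ℚ₇`, so it suffices that
`N` never takes a primitive cube root of unity `w` as value on `ℚ₇`. Clearing denominators turns
`N(a, b, c) = w` into `N(a, b, c) = 7^(3n) w` with `a, b, c ∈ ℤ₇`. As `7` is totally ramified in
`ℚ(θ)` (with uniformiser `θ - 2`), `7³ ∣ N(a, b, c)` forces `7 ∣ a, b, c`, so we may descend to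
`n = 0`. But `N(a, b, c) ≡ (a + 2b + 4c)³ mod 7`, and the cube roots of unity `2, 4` of `𝔽₇` are
not cubes.
-/

open Polynomial Filter

instance : Fact (Nat.Prime 7) := ⟨by norm_num⟩

/-- `N(a + bθ + cθ²)` for `θ` a root of `X³ + X² - 2X - 1`, i.e. `θ = ζ₇ + ζ₇⁻¹`. -/
def normForm {R : Type*} [CommRing R] (a b c : R) : R :=
  a^3 - a^2*b + 5*a^2*c - 2*a*b^2 - a*b*c + 6*a*c^2 + b^3 - b^2*c - 2*b*c^2 + c^3

section normForm

variable {R : Type*} [CommRing R]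

theorem map_normForm {S : Type*} [CommRing S] (f : R →+* S) (a b c : R) :
    f (normForm a b c) = normForm (f a) (f b) (f c) := by
  simp only [normForm, map_add, map_sub, map_mul, map_pow, map_ofNat]

theorem normForm_mul (t a b c : R) :
    normForm (t * a) (t * b) (t * c) = t ^ 3 * normForm a b c := by
  unfold normForm; ring

end normForm

theorem Algebra.norm_eq_normForm {R S : Type*} [CommRing R] [CommRing S] [Algebra R S]
    {θ : S} (hθ : θ ^ 3 + θ ^ 2 - 2 * θ - 1 = 0) (b : Module.Basis (Fin 3) R S)
    (hb : ∀ i, b i = θ ^ (i : ℕ)) (y : S) :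
    Algebra.norm R y = normForm (b.repr y 0) (b.repr y 1) (b.repr y 2) := by
  set x := b.repr y
  -- columns: the coordinates of `y`, `yθ`, `yθ²`, reduced by `θ³ = 1 + 2θ - θ²`
  set M : Matrix (Fin 3) (Fin 3) R := !![x 0, x 2, x 1 - x 2;
      x 1, x 0 + 2 * x 2, 2 * x 1 - x 2;
      x 2, x 1 - x 2, x 0 - x 1 + 3 * x 2]
  have hy : y = algebraMap R S (x 0) + algebraMap R S (x 1) * θ + algebraMap R S (x 2) * θ ^ 2 := by
    conv_lhs => rw [← b.sum_repr y]
    simp [Fin.sum_univ_three, hb, Algebra.smul_def, x]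
  have hmul : ∀ j, y * b j = ∑ i, M i j • b i := by
    intro j
    simp only [Fin.sum_univ_three, hb, Algebra.smul_def]
    fin_cases j <;> simp only [hy, M, Fin.isValue, Fin.zero_eta, Fin.mk_one, Fin.reduceFinMk,
      Matrix.of_apply, Matrix.cons_val', Matrix.cons_val, Matrix.cons_val_zero, Matrix.cons_val_one,
      Matrix.cons_val_fin_one, Fin.coe_ofNat_eq_mod, Nat.zero_mod, Nat.one_mod, Nat.mod_succ,
      pow_zero, pow_one, mul_one, map_add, map_sub, map_mul, map_ofNat]
    · linear_combination algebraMap R S (x 2) * hθ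
    · linear_combination (algebraMap R S (x 1) + algebraMap R S (x 2) * (θ - 1)) * hθ
  have hM : Algebra.leftMulMatrix b y = M := by
    ext i j
    rw [Algebra.leftMulMatrix_eq_repr_mul, hmul, b.repr_sum_self]
  rw [Algebra.norm_eq_matrix_det b, hM, Matrix.det_fin_three]
  simp only [M, normForm, Fin.isValue, Matrix.of_apply, Matrix.cons_val', Matrix.cons_val_zero,
    Matrix.cons_val_fin_one, Matrix.cons_val_one, Matrix.cons_val]
  ring

theorem exists_basis_eq_pow_of_adjoin_eq_top {K L : Type*} [Field K] [CommRing L] [Algebra K L]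
    [FiniteDimensional K L] {n : ℕ} (hn : Module.finrank K L = n) {θ : L}
    (hθ : Algebra.adjoin K {θ} = ⊤) : ∃ b : Module.Basis (Fin n) K L, ∀ i, b i = θ ^ (i : ℕ) := by
  set pb := PowerBasis.ofAdjoinEqTop (IsIntegral.of_finite K θ) hθ
  refine ⟨pb.basis.reindex (finCongr (pb.finrank.symm.trans hn)), fun i => ?_⟩
  rw [Module.Basis.reindex_apply, pb.basis_eq_pow]
  rfl

/-- Modulo `7`, `θ ≡ 2` is a triple root of `X³ + X² - 2X - 1`. -/
theorem normForm_zmod_seven (a b c : ZMod 7) : normForm a b c = (a + 2 * b + 4 * c) ^ 3 := by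
  have h7 : (7 : ZMod 7) = 0 := rfl
  unfold normForm
  linear_combination (-9*c^3 - 14*b*c^2 - 7*b^2*c - b^3 - 6*a*c^2 - 7*a*b*c - 2*a*b^2
    - a^2*c - a^2*b) * h7

theorem ZMod.pow_three_ne_of_sq_add_add_one (x t : ZMod 7) (ht : t ^ 2 + t + 1 = 0) :
    x ^ 3 ≠ t := by
  revert x t; decide

theorem Prime.dvd_of_pow_succ_dvd_pow_mul {R : Type*} [CommRing R] [IsDomain R] {π x r : R}
    (hπ : Prime π) {k m : ℕ} (h : π ^ (k + 1) ∣ π ^ k * (x ^ m + π * r)) : π ∣ x := by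
  rw [pow_succ, mul_dvd_mul_iff_left (pow_ne_zero k hπ.ne_zero)] at h
  exact hπ.dvd_of_dvd_pow ((dvd_add_left (dvd_mul_right π r)).mp h)

/-- In the coordinates `e = a + 2b + 4c`, `f = b + 4c`, `g = c` of the basis `1, π, π²`,
`π = θ - 2`, the form is `e³ - 7f³ + 49g³` plus terms of higher `7`-adic weight, so `7` divides
`e`, `f`, `g` in turn. -/
theorem seven_dvd_of_pow_three_dvd_normForm {a b c : ℤ_[7]} (h : 7 ^ 3 ∣ normForm a b c) :
    7 ∣ a ∧ 7 ∣ b ∧ 7 ∣ c := by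
  have h7 : Prime (7 : ℤ_[7]) := by exact_mod_cast PadicInt.prime_p (p := 7)
  obtain ⟨e, he⟩ : 7 ∣ a + 2 * b + 4 * c := by
    refine h7.dvd_of_pow_succ_dvd_pow_mul (k := 0) (m := 3) (r := -9*c^3 - 14*b*c^2 - 7*b^2*c
      - b^3 - 6*a*c^2 - 7*a*b*c - 2*a*b^2 - a^2*c - a^2*b) ?_
    exact (pow_dvd_pow 7 (by norm_num)).trans (h.trans (dvd_of_eq (by unfold normForm; ring)))
  obtain rfl : a = 7 * e - 2 * b - 4 * c := by linear_combination he
  obtain ⟨f, hf⟩ : 7 ∣ -(b + 4 * c) := by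
    refine h7.dvd_of_pow_succ_dvd_pow_mul (k := 1) (m := 3) (r := 7*e^3 - 7*e^2*(b + 4*c)
      + 21*e^2*c + 2*e*(b + 4*c)^2 - 11*e*(b + 4*c)*c + 14*e*c^2 + (b + 4*c)^2*c
      - 2*(b + 4*c)*c^2 + c^3) ?_
    exact (pow_dvd_pow 7 (by norm_num)).trans (h.trans (dvd_of_eq (by unfold normForm; ring)))
  obtain rfl : b = -7 * f - 4 * c := by linear_combination -hf
  obtain ⟨g, rfl⟩ : 7 ∣ c := by
    refine h7.dvd_of_pow_succ_dvd_pow_mul (k := 2) (m := 3) (r := e^3 + 7*e^2*f + 3*e^2*c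
      + 14*e*f^2 + 11*e*f*c + 2*e*c^2 + 7*f^3 + 7*f^2*c + 2*f*c^2) ?_
    exact h.trans (dvd_of_eq (by unfold normForm; ring))
  exact ⟨Dvd.intro (e + 2 * f + 4 * g) (by ring), Dvd.intro (-f - 4 * g) (by ring),
    dvd_mul_right 7 g⟩

theorem normForm_ne_seven_pow_mul {w : ℤ_[7]} (hw : w ^ 2 + w + 1 = 0) (n : ℕ) (a b c : ℤ_[7]) :
    normForm a b c ≠ 7 ^ (3 * n) * w := by
  induction n generalizing a b c with
  | zero =>
    intro h
    refine ZMod.pow_three_ne_of_sq_add_add_one (PadicInt.toZMod (a + 2 * b + 4 * c))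
      (PadicInt.toZMod w) (by simpa using congrArg PadicInt.toZMod hw) ?_
    simpa [map_normForm, normForm_zmod_seven, map_ofNat] using congrArg PadicInt.toZMod h
  | succ n ih =>
    intro h
    obtain ⟨⟨a', rfl⟩, ⟨b', rfl⟩, ⟨c', rfl⟩⟩ : 7 ∣ a ∧ 7 ∣ b ∧ 7 ∣ c :=
      seven_dvd_of_pow_three_dvd_normForm ⟨7 ^ (3 * n) * w, by rw [h]; ring⟩
    rw [normForm_mul] at h
    exact ih a' b' c' (mul_left_cancel₀ (by norm_num) (h.trans (by ring)))

theorem Padic.eventually_norm_pow_mul_le_one {p : ℕ} [Fact p.Prime] (x : ℚ_[p]) :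
    ∀ᶠ n in atTop, ‖(p : ℚ_[p]) ^ n * x‖ ≤ 1 := by
  have h := (tendsto_pow_atTop_nhds_zero_of_lt_one (norm_nonneg _)
    (Padic.norm_p_lt_one (p := p))).mul_const ‖x‖
  rw [zero_mul] at h
  filter_upwards [h.eventually (ge_mem_nhds zero_lt_one)] with n hn
  rwa [norm_mul, norm_pow]

theorem normForm_ne_of_sq_add_add_one_padic {w : ℚ_[7]} (hw : w ^ 2 + w + 1 = 0)
    (a b c : ℚ_[7]) : normForm a b c ≠ w := by
  intro h
  have hw1 : ‖w‖ = 1 := by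
    have h3 : ‖w‖ ^ 3 = 1 := by
      rw [← norm_pow, show w ^ 3 = 1 by linear_combination (w - 1) * hw, norm_one]
    exact (pow_eq_one_iff_of_nonneg (norm_nonneg _) (by norm_num)).mp h3
  obtain ⟨n, ha, hb, hc⟩ := (Padic.eventually_norm_pow_mul_le_one a).and
    ((Padic.eventually_norm_pow_mul_le_one b).and (Padic.eventually_norm_pow_mul_le_one c))
    |>.exists
  let A : ℤ_[7] := ⟨_, ha⟩
  let B : ℤ_[7] := ⟨_, hb⟩
  let C : ℤ_[7] := ⟨_, hc⟩
  let W : ℤ_[7] := ⟨w, hw1.le⟩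
  have hW : W ^ 2 + W + 1 = 0 := PadicInt.ext (by simpa using hw)
  have key : PadicInt.Coe.ringHom (normForm A B C) = PadicInt.Coe.ringHom (7 ^ (3 * n) * W) := by
    rw [map_normForm, map_mul, map_pow, map_ofNat]
    change normForm (_ * a) (_ * b) (_ * c) = _ * w
    rw [normForm_mul, h]
    push_cast
    ring
  exact normForm_ne_seven_pow_mul hW n A B C (PadicInt.ext key)

theorem exists_sq_add_add_one_eq_zero_padicInt : ∃ z : ℤ_[7], z ^ 2 + z + 1 = 0 := by
  have h7 : ‖(7 : ℤ_[7])‖ = 7⁻¹ := by exact_mod_cast PadicInt.norm_p (p := 7)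
  have h5 : ‖(5 : ℤ_[7])‖ = 1 := by
    refine le_antisymm (PadicInt.norm_le_one _) (not_lt.mp ?_)
    exact_mod_cast (PadicInt.norm_int_lt_one_iff_dvd (p := 7) 5).not.mpr (by norm_num)
  have hnorm : ‖(X ^ 2 + X + 1 : ℤ[X]).aeval (2 : ℤ_[7])‖ <
      ‖(X ^ 2 + X + 1 : ℤ[X]).derivative.aeval (2 : ℤ_[7])‖ ^ 2 := by
    simp only [derivative_X_pow, derivative_X, derivative_one, map_add, map_pow, map_mul, aeval_X,
      map_one, map_natCast, map_zero]
    norm_num [h7, h5]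
  obtain ⟨z, hz, -⟩ := hensels_lemma hnorm
  exact ⟨z, by simpa using hz⟩

theorem nonempty_ringHom_cyclotomicField_three_padic :
    Nonempty (CyclotomicField 3 ℚ →+* ℚ_[7]) := by
  obtain ⟨z, hz⟩ := exists_sq_add_add_one_eq_zero_padicInt
  have hprim : IsPrimitiveRoot (z : ℚ_[7]) 3 := by
    rw [← isRoot_cyclotomic_iff, cyclotomic_three]
    simpa using congrArg ((↑) : ℤ_[7] → ℚ_[7]) hz
  have hsplit : ((cyclotomic 3 ℚ).map (algebraMap ℚ ℚ_[7])).Splits := by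
    rw [map_cyclotomic]
    exact (X_pow_sub_one_splits hprim).of_dvd (X_pow_sub_C_ne_zero (by norm_num) 1)
      (by simpa using cyclotomic.dvd_X_pow_sub_one 3 ℚ_[7])
  exact ⟨(SplittingField.lift _ hsplit).toRingHom⟩

theorem zeta3_not_a_norm_general
    {L : Type*} [Field L] [Algebra (CyclotomicField 3 ℚ) L]
    (hrank : Module.finrank (CyclotomicField 3 ℚ) L = 3)
    (θ : L) (hθ : θ ^ 3 + θ ^ 2 - 2 * θ - 1 = 0)
    (hgen : Algebra.adjoin (CyclotomicField 3 ℚ) {θ} = ⊤)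
    (ζ : CyclotomicField 3 ℚ) (hζ : IsPrimitiveRoot ζ 3) :
    ∀ y : L, Algebra.norm (CyclotomicField 3 ℚ) y ≠ ζ ∧
      Algebra.norm (CyclotomicField 3 ℚ) y ≠ ζ ^ 2 := by
  have : FiniteDimensional (CyclotomicField 3 ℚ) L := Module.finite_of_finrank_eq_succ hrank
  obtain ⟨b, hb⟩ := exists_basis_eq_pow_of_adjoin_eq_top hrank hgen
  obtain ⟨φ⟩ := nonempty_ringHom_cyclotomicField_three_padic
  have norm_ne : ∀ ξ : CyclotomicField 3 ℚ, ξ ^ 2 + ξ + 1 = 0 → ∀ y : L,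
      Algebra.norm (CyclotomicField 3 ℚ) y ≠ ξ := by
    intro ξ hξ y h
    rw [Algebra.norm_eq_normForm hθ b hb] at h
    refine normForm_ne_of_sq_add_add_one_padic (w := φ ξ) ?_ _ _ _ (by rw [← h, map_normForm])
    simpa using congrArg φ hξ
  have hζ₁ : ζ ^ 2 + ζ + 1 = 0 := by simpa using hζ.isRoot_cyclotomic (by norm_num)
  have hζ₂ : (ζ ^ 2) ^ 2 + ζ ^ 2 + 1 = 0 := by linear_combination (ζ ^ 2 - ζ + 1) * hζ₁
  exact fun y => ⟨norm_ne ζ hζ₁ y, norm_ne (ζ ^ 2) hζ₂ y⟩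

/-- for L = ℚ(ζ₇ + ζ₇⁻¹, ζ₃), a cubic cyclic extension of
K = ℚ(ζ₃) generated by θ = ζ₇ + ζ₇⁻¹ (a root of X³ + X² - 2X - 1), neither ζ₃ nor ζ₃²
is a norm from L to K; hence the cyclic algebra (L/K, σ, ζ₃) is a division algebra. -/
theorem zeta3_not_a_norm
    {L : Type*} [Field L] [Algebra (CyclotomicField 3 ℚ) L]
    [IsGalois (CyclotomicField 3 ℚ) L]
    (hrank : Module.finrank (CyclotomicField 3 ℚ) L = 3)
    (θ : L) (hθ : θ ^ 3 + θ ^ 2 - 2 * θ - 1 = 0)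
    (hgen : Algebra.adjoin (CyclotomicField 3 ℚ) {θ} = ⊤)
    (ζ : CyclotomicField 3 ℚ) (hζ : IsPrimitiveRoot ζ 3) :
    ∀ y : L, Algebra.norm (CyclotomicField 3 ℚ) y ≠ ζ ∧
      Algebra.norm (CyclotomicField 3 ℚ) y ≠ ζ ^ 2 :=
  zeta3_not_a_norm_general hrank θ hθ hgen ζ hζ
end

section
/- In the algebra A = (L/ℚ(ζ₃), σ, ζ₃) with L = ℚ(ζ₇ + ζ₇^{-1}, ζ₃) and involution α given by α(x₀ + ex₁ + e²x₂) = conj(x₀) + e ζ₃² σ(conj(x₂)) + e² ζ₃² σ²(conj(x₁)): an element x = x₀ + ex₁ + e²x₂ with xᵢ = vᵢ + ζ₃wᵢ, vᵢ, wᵢ ∈ ℚ(ζ₇ + ζ₇^{-1}), satisfies α(x) = x if and only if x₀ is real (conj(x₀) = x₀), v₁ = -σ(v₂), and w₁ = σ(w₂) + v₁. -/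
open Matrix

noncomputable section

variable {K L A : Type*} [Field K] [Field L] [Algebra K L] [Ring A] [Algebra K A]

/-- in the algebra A = (L/ℚ(ζ₃), σ, ζ₃) with the involution α, an element
x = x₀ + e x₁ + e² x₂ with xᵢ = vᵢ + ζ₃ wᵢ (vᵢ, wᵢ in the real subfield, i.e. fixed by
α_L) satisfies α(x) = x iff α_L(x₀) = x₀, v₁ = -σ(v₂) and w₁ = σ(w₂) + v₁. -/
theorem fixed_by_involution_iff
    (σ : L ≃ₐ[K] L) (hσ : orderOf σ = 3) (hrank : Module.finrank K L = 3)
    (ζ : K) (hζ : IsPrimitiveRoot ζ 3)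
    (ι : L →ₐ[K] A) (hinj : Function.Injective ι) (e : A)
    (he : e ^ 3 = algebraMap K A ζ)
    (htwist : ∀ l : L, ι l * e = e * ι (σ l))
    (hbasis : ∀ x : A, ∃! c : Fin 3 → L, x = ι (c 0) + e * ι (c 1) + e ^ 2 * ι (c 2))
    (αL : L →+* L) (hαL : ∀ l : L, αL (αL l) = l)
    (hcomm : ∀ (τ : L ≃ₐ[K] L) (l : L), αL (τ l) = τ (αL l))
    (hαζ : αL (algebraMap K L ζ) = algebraMap K L ζ ^ 2)
    (v w : Fin 3 → L)
    (hv : ∀ i, αL (v i) = v i) (hw : ∀ i, αL (w i) = w i)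
    (c : Fin 3 → L) (hc : ∀ i, c i = v i + algebraMap K L ζ * w i) :
    cyclicInvolution ι e hbasis σ αL ζ (ι (c 0) + e * ι (c 1) + e ^ 2 * ι (c 2))
        = ι (c 0) + e * ι (c 1) + e ^ 2 * ι (c 2) ↔
      (αL (c 0) = c 0 ∧ v 1 = -σ (v 2) ∧ w 1 = σ (w 2) + v 1) := by
  -- scalar facts
  have hζ3 : ζ ^ 3 = 1 := hζ.pow_eq_one
  have hζ0 : ζ ≠ 0 := by
    intro h
    rw [h] at hζ3
    norm_num at hζ3
  have hζ1 : ζ ≠ 1 := hζ.ne_one (by norm_num)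
  have hζinv : ζ⁻¹ = ζ ^ 2 := inv_eq_of_mul_eq_one_right (by linear_combination hζ3)
  have hρ3 : (algebraMap K L ζ) ^ 3 = 1 := by rw [← _root_.map_pow, hζ3, _root_.map_one]
  have hρ0 : algebraMap K L ζ ≠ 0 := fun h =>
    hζ0 ((algebraMap K L).injective (by rw [_root_.map_zero]; exact h))
  have hρ1 : algebraMap K L ζ ≠ 1 := fun h =>
    hζ1 ((algebraMap K L).injective (by rw [_root_.map_one]; exact h))
  have hsum : (algebraMap K L ζ) ^ 2 + algebraMap K L ζ + 1 = 0 := by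
    have hfac : (algebraMap K L ζ - 1) * ((algebraMap K L ζ) ^ 2 + algebraMap K L ζ + 1) = 0 := by
      linear_combination hρ3
    rcases mul_eq_zero.mp hfac with h | h
    · exact absurd (sub_eq_zero.mp h) hρ1
    · exact h
  have hσ3 : ∀ l : L, σ (σ (σ l)) = l := by
    have h := pow_orderOf_eq_one σ
    rw [hσ] at h
    intro l
    have h' := DFunLike.congr_fun h l
    simpa [pow_succ, AlgEquiv.mul_apply] using h'
  have hsymm : ∀ l : L, σ.symm l = σ (σ l) := by
    intro l
    apply σ.injective
    rw [AlgEquiv.apply_symm_apply, hσ3]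
  -- commutation in A
  have hce : ∀ k : K, Commute (algebraMap K A k) e := by
    intro k
    have h := htwist (algebraMap K L k)
    rw [σ.commutes, ι.commutes] at h
    exact h
  have htwist2 : ∀ a : L, ι a * e ^ 2 = e ^ 2 * ι (σ (σ a)) := by
    intro a
    rw [pow_two, ← mul_assoc, htwist, mul_assoc, htwist, ← mul_assoc]
  have hE1 : ∀ a : L, algebraMap K A (ζ ^ 2) * e ^ 2 * ι a
      = e ^ 2 * ι (algebraMap K L (ζ ^ 2) * a) := by
    intro a
    rw [show algebraMap K A (ζ ^ 2) = ι (algebraMap K L (ζ ^ 2)) from (ι.commutes _).symm,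
      htwist2, σ.commutes, σ.commutes, mul_assoc, ← _root_.map_mul]
  have hE2 : ∀ a : L, (algebraMap K A (ζ ^ 2) * e ^ 2) ^ 2 * ι a
      = e * ι (algebraMap K L (ζ ^ 2) * a) := by
    intro a
    have hcomm2 : Commute (algebraMap K A (ζ ^ 2)) (e ^ 2) := (hce (ζ ^ 2)).pow_right 2
    have hee : (e ^ 2) ^ 2 = algebraMap K A ζ * e := by
      rw [← pow_mul, show 2 * 2 = 3 + 1 from rfl, pow_succ, he]
    have haa : (algebraMap K A (ζ ^ 2)) ^ 2 = algebraMap K A ((ζ ^ 2) ^ 2) :=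
      (_root_.map_pow _ _ _).symm
    rw [hcomm2.mul_pow, hee, haa, ← mul_assoc, ← _root_.map_mul,
      show (ζ ^ 2) ^ 2 * ζ = ζ ^ 2 from by linear_combination ζ ^ 2 * hζ3,
      (hce (ζ ^ 2)).eq, mul_assoc,
      show algebraMap K A (ζ ^ 2) = ι (algebraMap K L (ζ ^ 2)) from (ι.commutes _).symm,
      ← _root_.map_mul]
  -- the coefficients of x are c
  have hcoeff : coeff ι e hbasis (ι (c 0) + e * ι (c 1) + e ^ 2 * ι (c 2)) = c :=
    ((hbasis (ι (c 0) + e * ι (c 1) + e ^ 2 * ι (c 2))).choose_spec.2 c rfl).symm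
  have hz : algebraMap K L ζ * αL (algebraMap K L ζ) = 1 := by
    rw [hαζ]; linear_combination hρ3
  have hval : cyclicInvolution ι e hbasis σ αL ζ (ι (c 0) + e * ι (c 1) + e ^ 2 * ι (c 2))
      = ι (αL (c 0)) + e * ι (algebraMap K L (ζ ^ 2) * σ (αL (c 2)))
        + e ^ 2 * ι (algebraMap K L (ζ ^ 2) * σ (σ (αL (c 1)))) := by
    simp only [cyclicInvolution]
    rw [hcoeff, hz]
    simp only [one_pow, one_mul]
    rw [hζinv, hE1, hE2]
    simp only [hsymm, hσ3]
    exact add_right_comm _ _ _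
  have hmap2 : algebraMap K L (ζ ^ 2) = algebraMap K L ζ ^ 2 := _root_.map_pow _ _ _
  have key : ∀ d₀ d₁ d₂ : L,
      ι d₀ + e * ι d₁ + e ^ 2 * ι d₂ = ι (c 0) + e * ι (c 1) + e ^ 2 * ι (c 2) →
      d₀ = c 0 ∧ d₁ = c 1 ∧ d₂ = c 2 := by
    intro d₀ d₁ d₂ h
    have hu : ![d₀, d₁, d₂] = c :=
      ExistsUnique.unique (hbasis (ι (c 0) + e * ι (c 1) + e ^ 2 * ι (c 2)))
        (by simpa using h.symm) rfl
    exact ⟨by simpa using congrFun hu 0, by simpa using congrFun hu 1,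
      by simpa using congrFun hu 2⟩
  have hαLc : ∀ i, αL (c i) = v i + algebraMap K L ζ ^ 2 * w i := by
    intro i
    rw [hc, _root_.map_add, _root_.map_mul, hαζ, hv, hw]
  have hσαLc : ∀ i, σ (αL (c i)) = σ (v i) + algebraMap K L ζ ^ 2 * σ (w i) := by
    intro i
    rw [hαLc, _root_.map_add, _root_.map_mul, _root_.map_pow, σ.commutes]
  have hfixσ : ∀ x : L, αL x = x → αL (σ x) = σ x := by
    intro x hx
    rw [hcomm, hx]
  have hsplit : ∀ a b a' b' : L, αL a = a → αL b = b → αL a' = a' → αL b' = b' →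
      a + algebraMap K L ζ * b = a' + algebraMap K L ζ * b' → a = a' ∧ b = b' := by
    intro a b a' b' ha hb ha' hb' h
    have h2 : a + algebraMap K L ζ ^ 2 * b = a' + algebraMap K L ζ ^ 2 * b' := by
      have h' := congrArg αL h
      simpa [_root_.map_add, _root_.map_mul, hαζ, ha, hb, ha', hb'] using h'
    have hbb : b = b' := by
      have h3 : (algebraMap K L ζ - algebraMap K L ζ ^ 2) * (b - b') = 0 := by
        linear_combination h - h2
      have hne : algebraMap K L ζ - algebraMap K L ζ ^ 2 ≠ 0 := by
        intro hcon
        have h4 : algebraMap K L ζ * (1 - algebraMap K L ζ) = 0 := by linear_combination hcon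
        rcases mul_eq_zero.mp h4 with h5 | h5
        · exact hρ0 h5
        · exact hρ1 (by linear_combination -h5)
      exact sub_eq_zero.mp ((mul_eq_zero.mp h3).resolve_left hne)
    exact ⟨by linear_combination h - algebraMap K L ζ * hbb, hbb⟩
  rw [hval, hmap2]
  constructor
  · intro h
    obtain ⟨h0, h1, h2⟩ := key _ _ _ h
    rw [hσαLc 2, hc 1] at h1
    have h1' : (-σ (v 2)) + algebraMap K L ζ * (σ (w 2) - σ (v 2))
        = v 1 + algebraMap K L ζ * w 1 := by
      linear_combination h1 - σ (v 2) * hsum - algebraMap K L ζ * σ (w 2) * hρ3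
    obtain ⟨hA, hB⟩ := hsplit (-σ (v 2)) (σ (w 2) - σ (v 2)) (v 1) (w 1)
      (by rw [_root_.map_neg, hfixσ _ (hv 2)])
      (by rw [_root_.map_sub, hfixσ _ (hw 2), hfixσ _ (hv 2)])
      (hv 1) (hw 1) h1'
    exact ⟨h0, hA.symm, by linear_combination hA - hB⟩
  · rintro ⟨h0, hv1, hw1⟩
    have e1 : algebraMap K L ζ ^ 2 * σ (αL (c 2)) = c 1 := by
      rw [hσαLc 2, hc 1]
      linear_combination σ (v 2) * hsum + algebraMap K L ζ * σ (w 2) * hρ3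
        + (-(algebraMap K L ζ) - 1) * hv1 + (-(algebraMap K L ζ)) * hw1
    have e2 : algebraMap K L ζ ^ 2 * σ (σ (αL (c 1))) = c 2 := by
      rw [hαLc 1, hv1, hw1, hv1, hc 2]
      simp only [_root_.map_add, _root_.map_mul, _root_.map_neg, _root_.map_pow, AlgEquiv.commutes, hσ3]
      linear_combination (w 2 - v 2) * algebraMap K L ζ * hρ3 - v 2 * hsum
    rw [h0, e1, e2]
end
end
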